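/- arXiv:2008.03131 — 3 statements merged into one kernel-verified Lean document; each statement's English description precedes it below -/
import Mathlib

section
/- In a 4-3-6-5 sequence, types (4,3) and (4,2) can occur only among the first two elements of the sequence; they never appear later. -/
/-- One transition of Table 1 of the paper, acting on (current element, type). -/
def step465 : ℕ × ℕ × ℕ → ℕ × ℕ × ℕ
  | (t, 4, 3) => (t - 1, 4, 2)
  | (t, 4, 2) => (t - 1, 4, 1)
  | (t, 4, 1) => ((3 * t + 1) / 4, 3, 1)
  | (t, 4, 0) => (3 * t / 4, 3, 0)
  | (t, 3, 1) => if 4 < t then (t, 6, t % 6) else (3, 3, 0)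
  | (t, 3, 0) => if 4 < t then (t, 6, t % 6) else (t, 3, 0)
  | (t, 6, 4) => (t - 1, 6, 3)
  | (t, 6, 3) => (t - 1, 6, 2)
  | (t, 6, 2) => (t - 1, 6, 1)
  | (t, 6, 1) => ((5 * t + 1) / 6, 5, 1)
  | (t, 6, 0) => (5 * t / 6, 5, 0)
  | (t, 5, 1) => ((4 * t + 1) / 5, 4, 1)
  | (t, 5, 0) => (4 * t / 5, 4, 0)
  | p => p

/-- The `i`-th element (0-indexed, paired with its type) of the 4-3-6-5 sequence starting at `k`. -/
def seq465 (k i : ℕ) : ℕ × ℕ × ℕ := step465^[i] (k, 4, k % 4)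

/-! No transition produces type `(4,3)`, and the only one producing `(4,2)` starts from `(4,3)`.
So `(4,3)` cannot occur after the first element, and `(4,2)` not after the second. -/

lemma snd_step465_ne_four_three (p : ℕ × ℕ × ℕ) : (step465 p).2 ≠ (4, 3) := by
  obtain ⟨t, a, b⟩ := p
  unfold step465
  split <;> (try split) <;> simp_all

lemma snd_step465_ne_four_two {p : ℕ × ℕ × ℕ} (hp : p.2 ≠ (4, 3)) :
    (step465 p).2 ≠ (4, 2) := by
  obtain ⟨t, a, b⟩ := p
  unfold step465
  split <;> (try split) <;> simp_all

lemma snd_step465_iterate_ne_four_three (n : ℕ) (p : ℕ × ℕ × ℕ) :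
    (step465^[n + 1] p).2 ≠ (4, 3) := by
  rw [Function.iterate_succ_apply']
  exact snd_step465_ne_four_three _

lemma snd_step465_iterate_ne_four_two (n : ℕ) (p : ℕ × ℕ × ℕ) :
    (step465^[n + 2] p).2 ≠ (4, 2) := by
  rw [Function.iterate_succ_apply']
  exact snd_step465_ne_four_two (snd_step465_iterate_ne_four_three n p)

theorem seq465_no_late_43_42_general (k : ℕ) (i : ℕ) (hi : 2 ≤ i) :
    (seq465 k i).2 ≠ (4, 3) ∧ (seq465 k i).2 ≠ (4, 2) := by
  obtain ⟨n, rfl⟩ := Nat.exists_eq_add_of_le' hi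
  exact ⟨snd_step465_iterate_ne_four_three (n + 1) _, snd_step465_iterate_ne_four_two n _⟩

/-- In a 4-3-6-5 sequence, types `(4,3)` and `(4,2)` can occur only among the first two
elements of the sequence; they never appear later. -/
theorem seq465_no_late_43_42 (k : ℕ) (hk : 4 ≤ k) (i : ℕ) (hi : 2 ≤ i) :
    (seq465 k i).2 ≠ (4, 3) ∧ (seq465 k i).2 ≠ (4, 2) :=
  seq465_no_late_43_42_general k i hi
end

section
/- If an element t of type (4,0) begins a segment of a 4-3-6-5 sequence and the segment has 4 elements, then the segment is exactly {t, 3t/4, 3t/4, 5t/8} and the next segment begins with the element t/2 of type (4,0). -/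
/-- An element starts a new segment iff its type is `(4,0)` or `(4,1)`. -/
def isStart465 (p : ℕ × ℕ × ℕ) : Prop := p.2 = (4, 0) ∨ p.2 = (4, 1)

/-! The type `(a, c)` of an element with `a ∈ {4, 5, 6}` records its residue `c` modulo `a`, and
this is preserved by every transition. Hence an element `t` of type `(4,0)` is divisible by 4 and is
followed by `(3t/4, 3, 0)`. From there a new segment can start three steps later only if `3t/4 > 4`
and `6 ∣ 3t/4`, i.e. `8 ∣ t`, and then the sequence runs `(3t/4, 6, 0)`, `(5t/8, 5, 0)`,
`(t/2, 4, 0)`. -/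

def Consistent465 : ℕ × ℕ × ℕ → Prop
  | (_, 3, c) => c < 2
  | (t, 4, c) => t % 4 = c
  | (t, 5, c) => t % 5 = c ∧ c < 2
  | (t, 6, c) => t % 6 = c
  | _ => False

lemma consistent465_step465 {p : ℕ × ℕ × ℕ} (h : Consistent465 p) :
    Consistent465 (step465 p) := by
  obtain ⟨t, a, c⟩ := p
  match a, h with
  | 3, h =>
    have : c < 2 := h
    interval_cases c <;> simp only [step465] <;> split_ifs <;> simp [Consistent465]
  | 4, h =>
    have : c < 4 := by simp only [Consistent465] at h; omega
    interval_cases c <;> simp_all [Consistent465, step465] <;> omega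
  | 5, h =>
    have : c < 2 := h.2
    interval_cases c <;> simp_all [Consistent465, step465] <;> omega
  | 6, h =>
    have : c < 6 := by simp only [Consistent465] at h; omega
    interval_cases c <;> simp_all [Consistent465, step465] <;> omega

lemma seq465_add (k i n : ℕ) : seq465 k (i + n) = step465^[n] (seq465 k i) := by
  rw [seq465, seq465, add_comm, Function.iterate_add_apply]

lemma seq465_succ (k i : ℕ) : seq465 k (i + 1) = step465 (seq465 k i) :=
  seq465_add k i 1

lemma consistent465_seq465 (k i : ℕ) : Consistent465 (seq465 k i) := by
  induction i with
  | zero => simp [seq465, Consistent465]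
  | succ i ih => rw [seq465_succ]; exact consistent465_step465 ih

lemma mod_four_eq_of_seq465_eq {k i t c : ℕ} (h : seq465 k i = (t, 4, c)) : t % 4 = c := by
  simpa [h, Consistent465] using consistent465_seq465 k i

/-- If `u ≤ 4` the sequence is stuck at `(u, 3, 0)`; if `u ≡ 3 (mod 6)` the third step lands on
type `(6, 1)`. -/
lemma lt_and_mod_six_of_isStart465_step465_iterate_three {u : ℕ} (hu : u % 3 = 0)
    (h : isStart465 (step465^[3] (u, 3, 0))) : 4 < u ∧ u % 6 = 0 := by
  by_cases hbig : 4 < u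
  · refine ⟨hbig, ?_⟩
    rcases (by omega : u % 6 = 0 ∨ u % 6 = 3) with h6 | h6
    · exact h6
    · simp [step465, hbig, h6, isStart465] at h
  · simp [step465, hbig, isStart465] at h

theorem seq465_segment40_four_general (k : ℕ) (i t : ℕ)
    (hstart : seq465 k i = (t, 4, 0))
    (hnext : isStart465 (seq465 k (i + 4))) :
    (seq465 k (i + 1)).1 = 3 * t / 4 ∧ (seq465 k (i + 2)).1 = 3 * t / 4 ∧
    (seq465 k (i + 3)).1 = 5 * t / 8 ∧ seq465 k (i + 4) = (t / 2, 4, 0) := by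
  have ht : t % 4 = 0 := mod_four_eq_of_seq465_eq hstart
  have h1 : seq465 k (i + 1) = (3 * t / 4, 3, 0) := by rw [seq465_succ, hstart]; rfl
  obtain ⟨hbig, h6⟩ : 4 < 3 * t / 4 ∧ 3 * t / 4 % 6 = 0 := by
    refine lt_and_mod_six_of_isStart465_step465_iterate_three (by omega) ?_
    rwa [← h1, ← seq465_add]
  have h2 : seq465 k (i + 2) = (3 * t / 4, 6, 0) := by
    rw [seq465_succ, h1]; simp [step465, hbig, h6]
  have h3 : seq465 k (i + 3) = (5 * (3 * t / 4) / 6, 5, 0) := by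
    rw [seq465_succ, h2]; rfl
  have h4 : seq465 k (i + 4) = (4 * (5 * (3 * t / 4) / 6) / 5, 4, 0) := by
    rw [seq465_succ, h3]; rfl
  refine ⟨by rw [h1], by rw [h2], by rw [h3]; omega, by rw [h4]; congr 1; omega⟩

/-- If an element `t` of type `(4,0)` begins a segment of a 4-3-6-5 sequence and the segment
has exactly 4 elements, then the segment is `t, 3t/4, 3t/4, 5t/8` and the next segment begins
with the element `t/2` of type `(4,0)`. -/
theorem seq465_segment40_four (k : ℕ) (hk : 4 ≤ k) (i t : ℕ)
    (hstart : seq465 k i = (t, 4, 0))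
    (hmid : ∀ m, i < m → m < i + 4 → ¬ isStart465 (seq465 k m))
    (hnext : isStart465 (seq465 k (i + 4))) :
    (seq465 k (i + 1)).1 = 3 * t / 4 ∧ (seq465 k (i + 2)).1 = 3 * t / 4 ∧
    (seq465 k (i + 3)).1 = 5 * t / 8 ∧ seq465 k (i + 4) = (t / 2, 4, 0) :=
  seq465_segment40_four_general k i t hstart hnext
end

section
/- The total number of elements N(k) of the 4-3-6-5 sequence starting at k satisfies N(k) ≤ 7·log₂(k). -/
/-!
Write a state of type `(4, r)`, `r ≤ 1`, as `t = 8b + r` or `t = 8b + 4 + r`. One pass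
`4 → 3 → 6 → 5 → 4` takes `c = 4` steps in the first case and `c = 6 + r` in the second and
leads to `(4b + r, 4, r)`, resp. `(4b + 1, 4, 1)`; in both cases the new value `t'` satisfies
`2 ^ c * t' ^ 7 ≤ t ^ 7`. Multiplying these along the sequence, the number `N` of steps to
the terminal value satisfies `2 ^ N ≤ t ^ 7`, i.e. `N ≤ 7 log₂ t`, with room to spare for the
at most two initial decrements that bring a start value `k ≡ 2, 3 (mod 4)` to type `(4, 1)`.
-/

theorem mul_pow_le_pow_of_mul_le_mul {a n p q x y : ℕ} (hq : 0 < q) (hpq : a * q ^ n ≤ p ^ n)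
    (h : p * y ≤ q * x) : a * y ^ n ≤ x ^ n := by
  refine Nat.le_of_mul_le_mul_left ?_ (pow_pos hq n)
  calc q ^ n * (a * y ^ n) = a * q ^ n * y ^ n := by ring
    _ ≤ p ^ n * y ^ n := Nat.mul_le_mul_right _ hpq
    _ = (p * y) ^ n := (mul_pow p y n).symm
    _ ≤ (q * x) ^ n := Nat.pow_le_pow_left h n
    _ = q ^ n * x ^ n := mul_pow q x n

theorem natCast_le_mul_logb_of_pow_le {b m a k : ℕ} (hb : 1 < b) (hk : 0 < k)
    (h : b ^ m ≤ k ^ a) : (m : ℝ) ≤ a * Real.logb b k := by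
  have hb' : (1 : ℝ) < b := by exact_mod_cast hb
  rw [← Real.logb_pow, Real.le_logb_iff_rpow_le hb' (by positivity), Real.rpow_natCast]
  exact_mod_cast h

namespace Step465

theorem step_four {t u r : ℕ} (hr : r ≤ 1) (h : 4 * u = 3 * t + r) :
    step465 (t, 4, r) = (u, 3, r) := by
  interval_cases r <;> simp only [step465, Prod.mk.injEq, and_true] <;> omega

theorem step_three {u r : ℕ} (hu : 4 < u) (hr : r ≤ 1) : step465 (u, 3, r) = (u, 6, u % 6) := by
  interval_cases r <;> simp [step465, hu]

theorem iterate_two_six (b r : ℕ) (hr : r ≤ 1) :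
    step465^[2] (6 * b + r, 6, r) = (4 * b + r, 4, r) := by
  interval_cases r <;>
    simp only [Function.iterate_succ_apply, Function.iterate_zero_apply, step465,
      Prod.mk.injEq, and_true] <;> omega

theorem iterate_dec_four (t d : ℕ) (hd : d ≤ 2) :
    step465^[d] (t + d, 4, d + 1) = (t, 4, 1) := by
  interval_cases d <;> rfl

theorem iterate_dec_six (t d : ℕ) (hd : d ≤ 3) :
    step465^[d] (t + d, 6, d + 1) = (t, 6, 1) := by
  interval_cases d <;> rfl

theorem iterate_four_eight_mul_add {b r : ℕ} (hb : 1 ≤ b) (hr : r ≤ 1) :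
    step465^[4] (8 * b + r, 4, r) = (4 * b + r, 4, r) := by
  show step465^[2] (step465 (step465 (8 * b + r, 4, r))) = _
  rw [step_four (u := 6 * b + r) hr (by omega), step_three (u := 6 * b + r) (by omega) hr,
    show (6 * b + r) % 6 = r by omega, iterate_two_six b r hr]

theorem iterate_six_add_eight_mul_add_four {b r : ℕ} (hb : 1 ≤ b) (hr : r ≤ 1) :
    step465^[6 + r] (8 * b + 4 + r, 4, r) = (4 * b + 1, 4, 1) := by
  rw [show 6 + r = 2 + ((2 + r) + 2) by omega, Function.iterate_add_apply,
    Function.iterate_add_apply]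
  show step465^[2] (step465^[2 + r] (step465 (step465 (8 * b + 4 + r, 4, r)))) = _
  rw [step_four (u := 6 * b + 3 + r) hr (by omega),
    step_three (u := 6 * b + 3 + r) (by omega) hr,
    show (6 * b + 3 + r) % 6 = (2 + r) + 1 by omega,
    show 6 * b + 3 + r = (6 * b + 1) + (2 + r) by omega,
    iterate_dec_six (6 * b + 1) (2 + r) (by omega), iterate_two_six b 1 le_rfl]

theorem exists_iterate_eq_lt_of_eight_le {t : ℕ} (ht : 8 ≤ t) (hr : t % 4 ≤ 1) :
    ∃ t' c, 4 ≤ t' ∧ t' < t ∧ t' % 4 ≤ 1 ∧ step465^[c] (t, 4, t % 4) = (t', 4, t' % 4) ∧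
      2 ^ c * t' ^ 7 ≤ t ^ 7 := by
  obtain ⟨b, r, hb, hr1, rfl | rfl⟩ :
      ∃ b r, 1 ≤ b ∧ r ≤ 1 ∧ (t = 8 * b + r ∨ t = 8 * b + 4 + r) :=
    ⟨t / 8, t % 4, by omega, hr, by omega⟩
  · refine ⟨4 * b + r, 4, by omega, by omega, by omega, ?_, ?_⟩
    · rw [show (8 * b + r) % 4 = r by omega, show (4 * b + r) % 4 = r by omega]
      exact iterate_four_eight_mul_add hb hr1
    · -- `(8b + r) / (4b + r) ≥ 9 / 5` for `b ≥ 1`, and `(9 / 5) ^ 7 ≥ 2 ^ 4`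
      exact mul_pow_le_pow_of_mul_le_mul (p := 9) (q := 5) (by norm_num) (by norm_num)
        (by omega)
  · refine ⟨4 * b + 1, 6 + r, by omega, by omega, by omega, ?_, ?_⟩
    · rw [show (8 * b + 4 + r) % 4 = r by omega, show (4 * b + 1) % 4 = 1 by omega]
      exact iterate_six_add_eight_mul_add_four hb hr1
    · refine mul_pow_le_pow_of_mul_le_mul (p := 2) (q := 1) one_pos ?_ (by omega)
      rw [one_pow, mul_one]
      exact Nat.pow_le_pow_right two_pos (by omega)

theorem exists_iterate_eq_terminal {t : ℕ} (ht : 4 ≤ t) (hr : t % 4 ≤ 1) :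
    ∃ j, step465^[j] (t, 4, t % 4) = (3, 3, 0) ∧ 2 ^ (j + 3) ≤ t ^ 7 := by
  induction t using Nat.strong_induction_on with
  | _ t ih =>
  by_cases h8 : t < 8
  · interval_cases t
    · exact ⟨1, rfl, by norm_num⟩
    · exact ⟨2, rfl, by norm_num⟩
    all_goals omega
  obtain ⟨t', c, ht', hlt, hr', hc, hpow⟩ := exists_iterate_eq_lt_of_eight_le (by omega) hr
  obtain ⟨j, hj, hpow'⟩ := ih t' hlt ht' hr'
  refine ⟨j + c, by rw [Function.iterate_add_apply, hc, hj], ?_⟩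
  calc 2 ^ (j + c + 3) = 2 ^ c * 2 ^ (j + 3) := by ring
    _ ≤ 2 ^ c * t' ^ 7 := Nat.mul_le_mul_left _ hpow'
    _ ≤ t ^ 7 := hpow

theorem exists_iterate_eq_mod_four_le_one {k : ℕ} (hk : 4 ≤ k) :
    ∃ t d, 4 ≤ t ∧ t ≤ k ∧ t % 4 ≤ 1 ∧ d ≤ 2 ∧ step465^[d] (k, 4, k % 4) = (t, 4, t % 4) := by
  by_cases hr : k % 4 ≤ 1
  · exact ⟨k, 0, hk, le_rfl, hr, Nat.zero_le 2, rfl⟩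
  obtain ⟨t, d, hd, rfl, hkd⟩ : ∃ t d, d ≤ 2 ∧ k = t + d ∧ k % 4 = d + 1 :=
    ⟨k - (k % 4 - 1), k % 4 - 1, by omega, by omega, by omega⟩
  refine ⟨t, d, by omega, by omega, by omega, hd, ?_⟩
  rw [hkd, show t % 4 = 1 by omega]
  exact iterate_dec_four t d hd

end Step465

theorem seq465_length_le_general (k : ℕ) (hk : 4 ≤ k) (n : ℕ)
    (hmin : ∀ m, m < n → seq465 k m ≠ (3, 3, 0)) :
    ((n + 1 : ℕ) : ℝ) ≤ 7 * Real.logb 2 k := by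
  obtain ⟨t, d, ht, htk, htr, hd, hkt⟩ := Step465.exists_iterate_eq_mod_four_le_one hk
  obtain ⟨j, hj, hpow⟩ := Step465.exists_iterate_eq_terminal ht htr
  have hn : n ≤ j + d := not_lt.mp fun h =>
    hmin _ h (by rw [seq465, Function.iterate_add_apply, hkt, hj])
  have := natCast_le_mul_logb_of_pow_le (b := 2) (a := 7) one_lt_two (by omega) <|
    calc 2 ^ (n + 1) ≤ 2 ^ (j + 3) := Nat.pow_le_pow_right two_pos (by omega)
      _ ≤ t ^ 7 := hpow
      _ ≤ k ^ 7 := Nat.pow_le_pow_left htk 7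
  exact_mod_cast this

/-- The total number of elements `N(k)` of the 4-3-6-5 sequence starting at `k` satisfies
`N(k) ≤ 7·log₂ k`.  Here the sequence has `n + 1` elements, where `n` is the position of the
first terminal element `(3,(3,0))`. -/
theorem seq465_length_le (k : ℕ) (hk : 4 ≤ k) (n : ℕ)
    (hterm : seq465 k n = (3, 3, 0)) (hmin : ∀ m, m < n → seq465 k m ≠ (3, 3, 0)) :
    ((n + 1 : ℕ) : ℝ) ≤ 7 * Real.logb 2 k :=
  seq465_length_le_general k hk n hmin
end
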